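/- For every integer n ≥ 4, the cardinality of the image of 𝒩 under the second iterate of the counting operator is |s^[2](𝒩)| = P(n) − 2, where P(n) denotes the number of unrestricted partitions of the integer n. -/

import Mathlib

/-!
For an `n`-chain `x`, the nonzero entries of `s(x)` are the fibre sizes of `x`, a partition `λ(x)`
of `n`, and `s²(x)` lists the multiplicities of the parts of `λ(x)` (its entry `0` being `n` minus
the number of parts). Away from the one-part partition these multiplicities determine `λ`, so `s²`
factors injectively through `λ`. Every partition is `λ` of a chain (number the blocks of a
composition), and `λ(x)` is the one-part partition iff `x` is constant, the all-ones partition iff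
`x` is injective. So `s²(𝒩)` is in bijection with the partitions of `n` other than these two.
-/

/-- The counting operator: `countOp n x j` is the number of indices `i` with `x i = j`. -/
def countOp (n : ℕ) (x : Fin n → ℕ) : Fin n → ℕ :=
  fun j => (Finset.univ.filter fun i => x i = (j : ℕ)).card

/-- `𝒩`: the set of `n`-chains that are neither constant nor injective. -/
def NSet (n : ℕ) : Set (Fin n → ℕ) :=
  {x | (∀ i, x i < n) ∧ (¬ ∃ c, ∀ i, x i = c) ∧ ¬ Function.Injective x}

open Finset

theorem List.ofFn_getD_eq_append_replicate {α : Type*} (L : List α) (d : α) {n : ℕ}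
    (hn : L.length ≤ n) :
    List.ofFn (fun k : Fin n => L.getD k d) = L ++ .replicate (n - L.length) d := by
  apply List.ext_getElem (by simp; omega)
  intro k hk _
  simp only [List.getElem_ofFn, List.getD_eq_getElem?_getD, List.getElem_append,
    List.getElem_replicate]
  split_ifs with h
  · simp [h]
  · simp [List.getElem?_eq_none (by omega : L.length ≤ k)]

theorem Composition.card_filter_index_eq {n : ℕ} {c : Composition n} (i : Fin c.length) :
    #{j | c.index j = i} = c.blocksFun i := by
  have hfiber : ({j | c.index j = i} : Finset (Fin n)) = univ.map (c.embedding i).toEmbedding := by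
    ext j
    simp [eq_comm, ← c.mem_range_embedding_iff']
  rw [hfiber, card_map, card_univ, Fintype.card_fin]

namespace Nat.Partition

def ones (n : ℕ) : Nat.Partition n where
  parts := Multiset.replicate n 1
  parts_pos h := by rw [Multiset.eq_of_mem_replicate h]; exact one_pos
  parts_sum := by simp

variable {n : ℕ} {p : Nat.Partition n}

theorem eq_ones_iff : p = ones n ↔ ∀ a ∈ p.parts, a = 1 := by
  refine ⟨fun h a ha => ?_, fun h => ?_⟩
  · subst h
    exact Multiset.eq_of_mem_replicate ha
  · have hrep : p.parts = Multiset.replicate (Multiset.card p.parts) 1 :=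
      Multiset.eq_replicate_card.2 h
    have hcard : Multiset.card p.parts = n := by
      have hsum := p.parts_sum
      rwa [hrep, Multiset.sum_replicate, smul_eq_mul, mul_one] at hsum
    ext1
    rw [hrep, hcard]
    rfl

theorem eq_indiscrete_iff (hn : n ≠ 0) : p = indiscrete n ↔ n ∈ p.parts := by
  refine ⟨fun h => by simp [h, indiscrete_parts hn], fun h => ?_⟩
  obtain ⟨t, ht⟩ := Multiset.exists_cons_of_mem h
  have ht0 : t = 0 := by
    have hsum := p.parts_sum
    rw [ht, Multiset.sum_cons, add_eq_left, Multiset.sum_eq_zero_iff] at hsum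
    exact Multiset.eq_zero_of_forall_notMem fun a ha =>
      (p.parts_pos (ht ▸ Multiset.mem_cons_of_mem ha)).ne' (hsum a ha)
  ext1
  rw [ht, ht0, indiscrete_parts hn]
  rfl

theorem lt_of_mem_parts_of_ne_indiscrete (hp : p ≠ indiscrete n) {a : ℕ} (ha : a ∈ p.parts) :
    a < n := by
  refine (le_of_mem_parts ha).lt_of_ne fun han => hp ?_
  subst han
  exact (eq_indiscrete_iff (p.parts_pos ha).ne').2 ha

theorem indiscrete_ne_ones (hn : 2 ≤ n) : indiscrete n ≠ ones n := by
  intro h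
  have := eq_ones_iff.1 h n (by simp [indiscrete_parts (by omega : n ≠ 0)])
  omega

theorem card_compl_indiscrete_ones (hn : 2 ≤ n) :
    #({indiscrete n, ones n}ᶜ : Finset (Nat.Partition n)) =
      Fintype.card (Nat.Partition n) - 2 := by
  rw [card_compl, card_pair (indiscrete_ne_ones hn)]

end Nat.Partition

def multiplicityVector {n : ℕ} (p : Nat.Partition n) : Fin n → ℕ :=
  fun j => if (j : ℕ) = 0 then n - Multiset.card p.parts else p.parts.count (j : ℕ)

theorem multiplicityVector_injOn (n : ℕ) :
    Set.InjOn (multiplicityVector (n := n)) {p | p ≠ .indiscrete n} := by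
  intro p hp q hq hpq
  ext1
  refine Multiset.ext.2 fun m => ?_
  by_cases hm : m ≠ 0 ∧ m < n
  · simpa [multiplicityVector, hm.1] using congrFun hpq ⟨m, hm.2⟩
  · have hnot (r : Nat.Partition n) (hr : r ≠ .indiscrete n) : m ∉ r.parts := fun h =>
      hm ⟨(r.parts_pos h).ne', r.lt_of_mem_parts_of_ne_indiscrete hr h⟩
    rw [Multiset.count_eq_zero.2 (hnot p hp), Multiset.count_eq_zero.2 (hnot q hq)]

section Chains

variable {n : ℕ} {x : Fin n → ℕ}

theorem sum_countOp (hx : ∀ i, x i < n) : ∑ j, countOp n x j = n := by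
  calc ∑ j, countOp n x j = ∑ j : Fin n, #{i | (⟨x i, hx i⟩ : Fin n) = j} := by
        simp only [countOp, Fin.ext_iff]
    _ = n := by rw [← card_eq_sum_card_fiberwise (by simp)]; simp

theorem countOp_eq_multiplicityVector_ofSums (y : Fin n → ℕ)
    (hy : (univ.val.map y).sum = n) :
    countOp n y = multiplicityVector (.ofSums n (univ.val.map y) hy) := by
  funext j
  by_cases hj : (j : ℕ) = 0
  · have hsplit := card_filter_add_card_filter_not (s := univ) (p := fun i => y i = 0)
    rw [card_univ, Fintype.card_fin] at hsplit
    rw [multiplicityVector, if_pos hj, Nat.Partition.ofSums_parts, Multiset.filter_map,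
      Multiset.card_map]
    change #{i | y i = (j : ℕ)} = n - #{i | ¬ y i = 0}
    rw [hj]
    omega
  · rw [multiplicityVector, if_neg hj, Nat.Partition.count_ofSums_of_ne_zero _ hj,
      Multiset.count_map]
    simp only [countOp, eq_comm (a := (j : ℕ))]
    rfl

def fiberPartition (x : Fin n → ℕ) (hx : ∀ i, x i < n) : Nat.Partition n :=
  .ofSums n (univ.val.map (countOp n x)) (sum_countOp hx)

theorem mem_fiberPartition_parts (hx : ∀ i, x i < n) {a : ℕ} :
    a ∈ (fiberPartition x hx).parts ↔ a ≠ 0 ∧ ∃ j, countOp n x j = a := by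
  simp [fiberPartition, and_comm]

theorem fiberPartition_eq_indiscrete_iff (hn : n ≠ 0) (hx : ∀ i, x i < n) :
    fiberPartition x hx = .indiscrete n ↔ ∃ c, ∀ i, x i = c := by
  rw [Nat.Partition.eq_indiscrete_iff hn, mem_fiberPartition_parts]
  simp only [countOp, ne_eq, hn, not_false_eq_true, true_and]
  constructor
  · rintro ⟨j, hj⟩
    have huniv := (card_eq_iff_eq_univ _).1 (hj.trans (Fintype.card_fin n).symm)
    exact ⟨j, fun i => by simpa using huniv.ge (mem_univ i)⟩
  · rintro ⟨c, hc⟩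
    have hcn : c < n := hc ⟨0, Nat.pos_of_ne_zero hn⟩ ▸ hx _
    exact ⟨⟨c, hcn⟩, by simp [hc]⟩

theorem fiberPartition_eq_ones_iff (hx : ∀ i, x i < n) :
    fiberPartition x hx = .ones n ↔ Function.Injective x := by
  rw [Nat.Partition.eq_ones_iff]
  simp only [mem_fiberPartition_parts]
  have hle_one : (∀ j, countOp n x j ≤ 1) ↔ Function.Injective x := by
    simp only [countOp, card_le_one, mem_filter, mem_univ, true_and]
    exact ⟨fun h a b hab => h ⟨x a, hx a⟩ a rfl b hab.symm,
      fun h j a ha b hb => h (ha.trans hb.symm)⟩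
  rw [← hle_one]
  refine ⟨fun h j => ?_, fun h a ⟨ha, j, hj⟩ => by have := h j; omega⟩
  by_contra hj
  have := h _ ⟨by omega, j, rfl⟩
  omega

theorem countOp_val_index (c : Composition n) (k : Fin n) :
    countOp n (fun j => c.index j) k = c.blocks.getD k 0 := by
  by_cases hk : (k : ℕ) < c.length
  · rw [List.getD_eq_getElem _ _ hk]
    calc countOp n _ k = #{j | c.index j = ⟨k, hk⟩} := by simp only [countOp, Fin.ext_iff]
      _ = c.blocks[k] := c.card_filter_index_eq _
  · rw [List.getD_eq_default _ _ (by simpa using hk)]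
    simp only [countOp, card_eq_zero, filter_eq_empty_iff]
    intro j _ h
    exact hk (h ▸ (c.index j).2)

theorem exists_fiberPartition_eq (p : Nat.Partition n) :
    ∃ x, ∃ hx : ∀ i, x i < n, fiberPartition x hx = p := by
  obtain ⟨c, rfl⟩ := Nat.Partition.ofComposition_surj p
  refine ⟨fun j => c.index j, fun j => (c.index j).2.trans_le c.length_le, ?_⟩
  ext1
  have hpos : ∀ a ∈ (c.blocks : Multiset ℕ), a ≠ 0 := fun a ha => (c.blocks_pos ha).ne'
  simp only [fiberPartition, Nat.Partition.ofSums_parts, Nat.Partition.ofComposition_parts,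
    funext (countOp_val_index c), Fin.univ_val_map,
    List.ofFn_getD_eq_append_replicate _ _ c.length_le, ← Multiset.coe_add, Multiset.filter_add,
    Multiset.filter_eq_self.2 hpos, Multiset.coe_replicate]
  rw [Multiset.filter_eq_nil.2 fun a ha => by simp [Multiset.eq_of_mem_replicate ha], add_zero]

theorem countOp_iterate_two (hx : ∀ i, x i < n) :
    (countOp n)^[2] x = multiplicityVector (fiberPartition x hx) :=
  countOp_eq_multiplicityVector_ofSums _ _

theorem countOp_iterate_two_image_NSet (hn : n ≠ 0) :
    (countOp n)^[2] '' NSet n =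
      multiplicityVector '' ↑({.indiscrete n, .ones n}ᶜ : Finset (Nat.Partition n)) := by
  ext z
  simp only [Set.mem_image, coe_compl, coe_insert, coe_singleton, Set.mem_compl_iff,
    Set.mem_insert_iff, Set.mem_singleton_iff, not_or]
  constructor
  · rintro ⟨x, ⟨hx, hconst, hinj⟩, rfl⟩
    exact ⟨fiberPartition x hx, ⟨(fiberPartition_eq_indiscrete_iff hn hx).not.2 hconst,
      (fiberPartition_eq_ones_iff hx).not.2 hinj⟩, (countOp_iterate_two hx).symm⟩
  · rintro ⟨p, ⟨hp_ind, hp_ones⟩, rfl⟩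
    obtain ⟨x, hx, rfl⟩ := exists_fiberPartition_eq p
    exact ⟨x, ⟨hx, (fiberPartition_eq_indiscrete_iff hn hx).not.1 hp_ind,
      (fiberPartition_eq_ones_iff hx).not.1 hp_ones⟩, countOp_iterate_two hx⟩

end Chains

theorem card_image_NSet_second_iterate (n : ℕ) (hn : 4 ≤ n) :
    ((countOp n)^[2] '' NSet n).ncard = Fintype.card (Nat.Partition n) - 2 := by
  have hinj : Set.InjOn multiplicityVector
      (↑({.indiscrete n, .ones n}ᶜ : Finset (Nat.Partition n))) :=
    (multiplicityVector_injOn n).mono fun p hp => by simp_all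
  rw [countOp_iterate_two_image_NSet (by omega), hinj.ncard_image, Set.ncard_coe_finset,
    Nat.Partition.card_compl_indiscrete_ones (by omega)]
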